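/- arXiv:1912.09900 — 2 statements merged into one kernel-verified Lean document; each statement's English description precedes it below -/
import Mathlib

section
/- Let $T = \mathrm{diag}(T_1, T_2, T_3)$ be an invertible diagonal $3\times 3$ real matrix and let $\hat{B}_0, \hat{B}_1, \hat{B}_2 \in \mathbb{R}^3$ be linearly independent. For $(x_0,x_1,x_2) \in \{0,1\}^3$, let $v_x = T^{-1}[(-1)^{x_0}\hat{B}_1\times\hat{B}_2 + (-1)^{x_1}\hat{B}_2\times\hat{B}_0 + (-1)^{x_2}\hat{B}_0\times\hat{B}_1]$ and $\hat{A}_x = v_x/\|v_x\|$. Then $\hat{A}_x \cdot ((-1)^{x_0} T\hat{B}_0) = \hat{A}_x \cdot ((-1)^{x_1} T\hat{B}_1) = \hat{A}_x \cdot ((-1)^{x_2} T\hat{B}_2)$. -/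
open scoped RealInnerProductSpace
open Finset

noncomputable section

abbrev E3 := EuclideanSpace ℝ (Fin 3)

/-- Componentwise action of the diagonal matrix `diag (T 0, T 1, T 2)`. -/
def diagMul (T : Fin 3 → ℝ) (v : E3) : E3 := WithLp.toLp 2 (fun i => T i * v i)

/-- Componentwise action of the inverse diagonal matrix `diag (T 0, T 1, T 2)⁻¹`. -/
def diagInv (T : Fin 3 → ℝ) (v : E3) : E3 := WithLp.toLp 2 (fun i => (T i)⁻¹ * v i)

/-- The sign `(-1)^x` for a bit `x ∈ {0,1}` encoded as a `Bool`. -/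
def sgn (x : Bool) : ℝ := if x then -1 else 1

/-!
Since `Tᵀ = T`, the factor `T⁻¹` in `v_x` cancels against `T` in `⟪v_x, T B̂_k⟫`, leaving the dot
product of the signed cross-product combination with `B̂_k`. By the cyclic symmetry of the scalar
triple product this is `(-1)^{x_k} [B̂_0, B̂_1, B̂_2]`, so after multiplying by `(-1)^{x_k}` all
three inner products equal `[B̂_0, B̂_1, B̂_2] / ‖v_x‖`.
-/

open Matrix

lemma sgn_mul_self (b : Bool) : sgn b * sgn b = 1 := by
  cases b <;> simp [sgn]

lemma inner_diagInv_diagMul (T : Fin 3 → ℝ) (hT : ∀ i, T i ≠ 0) (w u : E3) :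
    ⟪diagInv T w, diagMul T u⟫ = w ⬝ᵥ u := by
  simp only [PiLp.inner_apply, RCLike.inner_apply, conj_trivial, diagInv, diagMul,
    dotProduct, Fin.sum_univ_three]
  field_simp [hT 0, hT 1, hT 2]

theorem signed_crossProduct_sum_dotProduct {R : Type*} [CommRing R] (s : Fin 3 → R)
    (b : Fin 3 → Fin 3 → R) (i : Fin 3) :
    (s 0 • crossProduct (b 1) (b 2) + s 1 • crossProduct (b 2) (b 0)
      + s 2 • crossProduct (b 0) (b 1)) ⬝ᵥ b i = s i * (b 0 ⬝ᵥ crossProduct (b 1) (b 2)) := by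
  have h₁ := triple_product_permutation (b 0) (b 1) (b 2)
  have h₂ := triple_product_permutation (b 1) (b 2) (b 0)
  rw [dotProduct_comm]
  fin_cases i <;>
    simp [dotProduct_add, dotProduct_smul, dot_self_cross, dot_cross_self, h₁, h₂]

theorem stmt_6_general (T : Fin 3 → ℝ) (hT : ∀ i, T i ≠ 0) (B : Fin 3 → E3)
    (x : Fin 3 → Bool) :
    let v : E3 := diagInv T (WithLp.toLp 2 (sgn (x 0) • crossProduct (B 1) (B 2)
      + sgn (x 1) • crossProduct (B 2) (B 0) + sgn (x 2) • crossProduct (B 0) (B 1)))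
    let A : E3 := ‖v‖⁻¹ • v
    ⟪A, sgn (x 0) • diagMul T (B 0)⟫ = ⟪A, sgn (x 1) • diagMul T (B 1)⟫ ∧
      ⟪A, sgn (x 1) • diagMul T (B 1)⟫ = ⟪A, sgn (x 2) • diagMul T (B 2)⟫ := by
  intro v A
  have common : ∀ i, ⟪A, sgn (x i) • diagMul T (B i)⟫
      = ‖v‖⁻¹ * ((B 0 : Fin 3 → ℝ) ⬝ᵥ crossProduct (B 1) (B 2)) := by
    intro i
    rw [real_inner_smul_right, real_inner_smul_left, inner_diagInv_diagMul T hT,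
      WithLp.ofLp_toLp, signed_crossProduct_sum_dotProduct (fun j => sgn (x j)) (fun j => B j)]
    linear_combination (‖v‖⁻¹ * ((B 0 : Fin 3 → ℝ) ⬝ᵥ crossProduct (B 1) (B 2))) *
      sgn_mul_self (x i)
  exact ⟨(common 0).trans (common 1).symm, (common 1).trans (common 2).symm⟩

theorem stmt_6 (T : Fin 3 → ℝ) (hT : ∀ i, T i ≠ 0) (B : Fin 3 → E3)
    (hB : LinearIndependent ℝ B) (x : Fin 3 → Bool) :
    let v : E3 := diagInv T (WithLp.toLp 2 (sgn (x 0) • crossProduct (B 1) (B 2)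
      + sgn (x 1) • crossProduct (B 2) (B 0) + sgn (x 2) • crossProduct (B 0) (B 1)))
    let A : E3 := ‖v‖⁻¹ • v
    ⟪A, sgn (x 0) • diagMul T (B 0)⟫ = ⟪A, sgn (x 1) • diagMul T (B 1)⟫ ∧
      ⟪A, sgn (x 1) • diagMul T (B 1)⟫ = ⟪A, sgn (x 2) • diagMul T (B 2)⟫ :=
  stmt_6_general T hT B x
end
end

section
/- Let $T = \mathrm{diag}(T_1,T_2,T_3)$ with $0 < |T_3| \le |T_2| \le |T_1|$. Choosing the orthonormal pair $\hat{B}_0 = \frac{1}{\sqrt{2}}(0,1,1)$, $\hat{B}_1 = \frac{1}{\sqrt{2}}(0,1,-1)$, one has $\max_{(x_0,x_1)\in\{0,1\}^2}\|T^{-1}[(-1)^{x_0}\hat{B}_0+(-1)^{x_1}\hat{B}_1]\| = \frac{\sqrt{2}}{|T_3|}$. -/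
open scoped RealInnerProductSpace
open Finset

noncomputable section

/-! Each combination `±B₀ ± B₁` is `±√2` times a standard basis vector: `e₁` when the signs
agree and `e₂` when they differ. The diagonal map `T⁻¹` only rescales these, so the four norms
are `√2 / |T₁|` and `√2 / |T₂|`, and the larger one is `√2 / |T₂|`. -/

local notation "B₀" => ((Real.sqrt 2)⁻¹ • (WithLp.toLp 2 (![0, 1, 1] : Fin 3 → ℝ) : E3))
local notation "B₁" => ((Real.sqrt 2)⁻¹ • (WithLp.toLp 2 (![0, 1, -1] : Fin 3 → ℝ) : E3))

lemma diagInv_single (T : Fin 3 → ℝ) (i : Fin 3) (a : ℝ) :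
    diagInv T (EuclideanSpace.single i a) = EuclideanSpace.single i ((T i)⁻¹ * a) := by
  ext j
  by_cases h : j = i
  · subst h; simp [diagInv]
  · simp [diagInv, h]

lemma norm_diagInv_single (T : Fin 3 → ℝ) (i : Fin 3) (a : ℝ) :
    ‖diagInv T (EuclideanSpace.single i a)‖ = |a| / |T i| := by
  rw [diagInv_single, PiLp.norm_single, Real.norm_eq_abs, abs_mul, abs_inv, inv_mul_eq_div]

lemma abs_sgn (x : Bool) : |sgn x| = 1 := by
  cases x <;> simp [sgn]

lemma sgn_smul_add_sgn_smul (x y : Bool) :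
    sgn x • B₀ + sgn y • B₁ =
      if x = y then EuclideanSpace.single 1 (sgn x * √2)
      else EuclideanSpace.single 2 (sgn x * √2) := by
  have h : (√2)⁻¹ + (√2)⁻¹ = √2 := by
    rw [← two_mul, ← div_eq_mul_inv, Real.div_sqrt]
  ext i
  cases x <;> cases y <;> fin_cases i <;> simp [sgn, h] <;> linarith

lemma norm_diagInv_sgn_smul_add_sgn_smul (T : Fin 3 → ℝ) (x y : Bool) :
    ‖diagInv T (sgn x • B₀ + sgn y • B₁)‖ = if x = y then √2 / |T 1| else √2 / |T 2| := by
  rw [sgn_smul_add_sgn_smul]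
  split_ifs <;> simp only [norm_diagInv_single, abs_mul, abs_sgn, one_mul,
    abs_of_nonneg (Real.sqrt_nonneg 2)]

theorem stmt_16_general (T : Fin 3 → ℝ) (h3 : 0 < |T 2|) (h32 : |T 2| ≤ |T 1|) :
    (Finset.univ.sup' Finset.univ_nonempty fun x : Bool × Bool =>
        ‖diagInv T (sgn x.1 • ((Real.sqrt 2)⁻¹ • (WithLp.toLp 2 (![0, 1, 1] : Fin 3 → ℝ) : E3))
          + sgn x.2 • ((Real.sqrt 2)⁻¹ • (WithLp.toLp 2 (![0, 1, -1] : Fin 3 → ℝ) : E3)))‖)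
      = Real.sqrt 2 / |T 2| := by
  simp only [norm_diagInv_sgn_smul_add_sgn_smul]
  have hle : √2 / |T 1| ≤ √2 / |T 2| := div_le_div_of_nonneg_left (Real.sqrt_nonneg 2) h3 h32
  refine le_antisymm (Finset.sup'_le _ _ fun x _ => ?_)
    (Finset.le_sup'_of_le _ (b := (false, true)) (Finset.mem_univ _) ?_)
  · split_ifs
    exacts [hle, le_rfl]
  · simp

theorem stmt_16 (T : Fin 3 → ℝ) (h3 : 0 < |T 2|) (h32 : |T 2| ≤ |T 1|) (h21 : |T 1| ≤ |T 0|) :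
    (Finset.univ.sup' Finset.univ_nonempty fun x : Bool × Bool =>
        ‖diagInv T (sgn x.1 • ((Real.sqrt 2)⁻¹ • (WithLp.toLp 2 (![0, 1, 1] : Fin 3 → ℝ) : E3))
          + sgn x.2 • ((Real.sqrt 2)⁻¹ • (WithLp.toLp 2 (![0, 1, -1] : Fin 3 → ℝ) : E3)))‖)
      = Real.sqrt 2 / |T 2| :=
  stmt_16_general T h3 h32
end
end
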